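/- arXiv:1812.04597 — 2 statements merged into one kernel-verified Lean document; each statement's English description precedes it below -/
import Mathlib

section
/- Front-door identification (three-variable discrete case): suppose random variables (U, M, Z, T) on a finite space have joint density p(u, m, z, t) = p(u) p(m|u) p(z|m) p(t|z,u). Then the interventional distribution p(t | do(m), z) := Σ_u p(u) p(t | z, u) satisfies p(t | do(m), z) = Σ_{m'} p(t | z, m') p(m'), whenever all conditioning events have positive probability. -/
open Finset in
/-- Front-door identification (three-variable discrete case). With joint density
`p(u,m,z,t) = pU u * pM u m * pZ m z * pT z u t`, the interventional distribution
`p(t | do(m), z) := Σ_u pU u * pT z u t` equals `Σ_{m'} p(t | z, m') p(m')`,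
whenever all conditioning events have positive probability. -/
theorem front_door_identification
    {U M Z T : Type*} [Fintype U] [Fintype M] [Fintype Z] [Fintype T]
    (pU : U → ℝ) (pM : U → M → ℝ) (pZ : M → Z → ℝ) (pT : Z → U → T → ℝ)
    (hU0 : ∀ u, 0 ≤ pU u) (hU1 : ∑ u, pU u = 1)
    (hM0 : ∀ u m, 0 ≤ pM u m) (hM1 : ∀ u, ∑ m, pM u m = 1)
    (hZ0 : ∀ m z, 0 ≤ pZ m z) (hZ1 : ∀ m, ∑ z, pZ m z = 1)
    (hT0 : ∀ z u t, 0 ≤ pT z u t) (hT1 : ∀ z u, ∑ t, pT z u t = 1)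
    -- the joint density of the observed variables (u marginalized out)
    (joint : M → Z → T → ℝ)
    (hjoint : ∀ m z t, joint m z t = ∑ u, pU u * pM u m * pZ m z * pT z u t)
    -- positivity of all conditioning events p(z, m') > 0
    (z : Z) (hpos : ∀ m' : M, 0 < ∑ t, joint m' z t) :
    ∀ t : T,
      (∑ u, pU u * pT z u t) =
        ∑ m' : M, (joint m' z t / ∑ t', joint m' z t') * (∑ z', ∑ t', joint m' z' t') := by
  intro t
  -- key per-m' computation
  have key : ∀ m' : M,
      (joint m' z t / ∑ t', joint m' z t') * (∑ z', ∑ t', joint m' z' t')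
        = ∑ u, pU u * pM u m' * pT z u t := by
    intro m'
    set a := pZ m' z with ha
    set b := ∑ u, pU u * pM u m' with hb
    have hj : ∀ t₀, joint m' z t₀ = a * ∑ u, pU u * pM u m' * pT z u t₀ := by
      intro t₀
      rw [hjoint, Finset.mul_sum]
      exact Finset.sum_congr rfl fun u _ => by ring
    have hsum : (∑ t', joint m' z t') = a * b := by
      rw [hb, Finset.mul_sum]
      calc (∑ t', joint m' z t') = ∑ u, ∑ t', pU u * pM u m' * (a * pT z u t') := by
            rw [Finset.sum_comm]
            exact Finset.sum_congr rfl fun t' _ => by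
              rw [hj t', Finset.mul_sum]
              exact Finset.sum_congr rfl fun u _ => by ring
        _ = ∑ u, a * (pU u * pM u m') := by
            refine Finset.sum_congr rfl fun u _ => ?_
            rw [← Finset.mul_sum, ← Finset.mul_sum, hT1]
            ring
    have hmarg : (∑ z', ∑ t', joint m' z' t') = b := by
      calc (∑ z', ∑ t', joint m' z' t')
          = ∑ z', ∑ u, ∑ t', pU u * pM u m' * (pZ m' z' * pT z' u t') := by
            refine Finset.sum_congr rfl fun z' _ => ?_
            rw [Finset.sum_comm]
            refine Finset.sum_congr rfl fun t' _ => ?_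
            rw [hjoint]
            exact Finset.sum_congr rfl fun u _ => by ring
        _ = ∑ z', ∑ u, pZ m' z' * (pU u * pM u m') := by
            refine Finset.sum_congr rfl fun z' _ => Finset.sum_congr rfl fun u _ => ?_
            rw [← Finset.mul_sum, ← Finset.mul_sum, hT1]
            ring
        _ = b := by
            rw [Finset.sum_comm, hb]
            refine Finset.sum_congr rfl fun u _ => ?_
            rw [← Finset.sum_mul, hZ1, one_mul]
    have hab : 0 < a * b := hsum ▸ hpos m'
    have ha0 : a ≠ 0 := by rintro h; rw [h, zero_mul] at hab; exact lt_irrefl _ hab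
    have hb0 : b ≠ 0 := by rintro h; rw [h, mul_zero] at hab; exact lt_irrefl _ hab
    rw [hj t, hsum, hmarg]
    field_simp
  calc (∑ u, pU u * pT z u t)
      = ∑ u, (pU u * pT z u t) * ∑ m', pM u m' := by
        refine Finset.sum_congr rfl fun u _ => ?_
        rw [hM1]; ring
    _ = ∑ u, ∑ m', pU u * pM u m' * pT z u t := by
        refine Finset.sum_congr rfl fun u _ => ?_
        rw [Finset.mul_sum]
        exact Finset.sum_congr rfl fun m' _ => by ring
    _ = ∑ m', ∑ u, pU u * pM u m' * pT z u t := Finset.sum_comm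
    _ = _ := Finset.sum_congr rfl fun m' _ => (key m').symm
end

section
/- In the distribution p constructed by replacing the mechanisms of M with their Q-marginals (as in marginal replacement), the conditional distribution of the remaining variables given M equals the truncated (interventional) distribution: p(v_{∖M} | v_M) = ∏_{i∉M} qᵢ(vᵢ | v_{pa(i)}) whenever p(v_M) > 0, i.e., conditioning on M in p coincides with intervening on M in q. -/
/-!
Conditioning `p` on `v_M` leaves the factor `∏_{i∈M} margQ i (v i)` in front of the truncated
factorization `∏_{i∉M} qᵢ`, so it suffices that the truncated factorization sums to one over the
configurations agreeing with `v` on `M`. This holds for any set `S` of kernels: summing out a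
vertex of `S` that is maximal for the topological order `ord` removes its kernel, which sums to one,
and leaves the others unchanged, since none of them depends on that vertex.
-/

open Finset

section

variable {ι : Type*} [Fintype ι] [DecidableEq ι]
  {X : ι → Type*} [∀ i, Fintype (X i)] [∀ i, DecidableEq (X i)]

def agreeOn (T : Finset ι) (v : ∀ j, X j) : Finset (∀ j, X j) :=
  {y | ∀ j ∈ T, y j = v j}

@[simp]
lemma mem_agreeOn {T : Finset ι} {v y : ∀ j, X j} : y ∈ agreeOn T v ↔ ∀ j ∈ T, y j = v j := by
  simp [agreeOn]

lemma sum_agreeOn_compl_insert {β : Type*} [AddCommMonoid β] {a : ι} {s : Finset ι}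
    (ha : a ∉ s) (v : ∀ j, X j) (g : (∀ j, X j) → β) :
    ∑ y ∈ agreeOn (insert a s)ᶜ v, g y = ∑ y ∈ agreeOn sᶜ v, ∑ t, g (Function.update y a t) := by
  rw [← sum_product']
  refine sum_nbij' (fun y => (Function.update y a (v a), y a))
    (fun yt => Function.update yt.1 a yt.2) ?_ ?_ ?_ ?_ ?_
  · intro y hy
    simp only [mem_agreeOn, mem_compl, mem_insert, not_or, mem_product, mem_univ, and_true]
      at hy ⊢
    intro j hj
    by_cases hja : j = a
    · subst hja; simp
    · rw [Function.update_of_ne hja]; exact hy j ⟨hja, hj⟩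
  · intro yt hyt
    simp only [mem_agreeOn, mem_compl, mem_insert, not_or, mem_product, mem_univ, and_true]
      at hyt ⊢
    intro j hj
    rw [Function.update_of_ne hj.1]; exact hyt j hj.2
  · intro y _
    simp
  · rintro ⟨y, t⟩ hyt
    simp only [mem_agreeOn, mem_compl, mem_product, mem_univ, and_true] at hyt
    simp [← hyt a ha]
  · intro y _
    simp

theorem sum_agreeOn_compl_prod_eq_one (pa : ι → Finset ι) (ord : ι → ℕ)
    (hord : ∀ i, ∀ j ∈ pa i, ord j < ord i) (q : ι → (∀ j, X j) → ℝ)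
    (hq_local : ∀ i, ∀ x y : ∀ j, X j, (∀ j ∈ insert i (pa i), x j = y j) → q i x = q i y)
    (hq_norm : ∀ i, ∀ x : ∀ j, X j, ∑ xi : X i, q i (Function.update x i xi) = 1)
    (S : Finset ι) (v : ∀ j, X j) :
    ∑ y ∈ agreeOn Sᶜ v, ∏ i ∈ S, q i y = 1 := by
  induction S using Finset.induction_on_max_value ord with
  | empty =>
    have : agreeOn (univ : Finset ι) v = {v} := by
      ext y
      simp [funext_iff]
    simp [this]
  | insert a s ha hmax ih =>
    have hq_update : ∀ k ∈ s, ∀ y t, q k (Function.update y a t) = q k y := fun k hk y t =>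
      hq_local k _ y fun j hj => Function.update_of_ne (by
        rintro rfl
        rcases mem_insert.mp hj with rfl | hpa
        · exact ha hk
        · exact (hord k j hpa).not_ge (hmax k hk)) _ _
    calc ∑ y ∈ agreeOn (insert a s)ᶜ v, ∏ i ∈ insert a s, q i y
        = ∑ y ∈ agreeOn sᶜ v, (∑ t, q a (Function.update y a t)) * ∏ i ∈ s, q i y := by
          rw [sum_agreeOn_compl_insert ha]
          refine sum_congr rfl fun y _ => ?_
          rw [sum_mul]
          refine sum_congr rfl fun t _ => ?_
          rw [prod_insert ha, prod_congr rfl fun k hk => hq_update k hk y t]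
      _ = 1 := by simpa only [hq_norm, one_mul] using ih

end

open Finset in
theorem conditioning_equals_intervening_general
    {ι : Type*} [Fintype ι] [DecidableEq ι]
    (X : ι → Type*) [∀ i, Fintype (X i)] [∀ i, DecidableEq (X i)]
    (pa : ι → Finset ι)
    (ord : ι → ℕ) (hord : ∀ i, ∀ j ∈ pa i, ord j < ord i)  -- acyclicity
    (q : ∀ _ : ι, (∀ j, X j) → ℝ)
    (hq_pos : ∀ i x, 0 < q i x)
    (hq_local : ∀ i, ∀ x y : ∀ j, X j,
      (∀ j ∈ insert i (pa i), x j = y j) → q i x = q i y)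
    (hq_norm : ∀ i, ∀ x : ∀ j, X j, ∑ xi : X i, q i (Function.update x i xi) = 1)
    (Qd : (∀ j, X j) → ℝ) (hQd : ∀ x, Qd x = ∏ i, q i x)
    (margQ : ∀ i : ι, X i → ℝ)
    (hmarg : ∀ i xi, margQ i xi = ∑ x : ∀ j, X j, if x i = xi then Qd x else 0)
    (M : Finset ι)
    (p : (∀ j, X j) → ℝ)
    (hp : ∀ x, p x = (∏ i ∈ M, margQ i (x i)) * ∏ i ∈ Mᶜ, q i x) :
    ∀ v : ∀ j, X j,
      (0 < ∑ y : ∀ j, X j, if ∀ i ∈ M, y i = v i then p y else 0) ∧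
      p v / (∑ y : ∀ j, X j, if ∀ i ∈ M, y i = v i then p y else 0) =
        ∏ i ∈ Mᶜ, q i v := by
  intro v
  have hmarg_pos : 0 < ∏ i ∈ M, margQ i (v i) := prod_pos fun i _ => by
    rw [hmarg, ← sum_filter]
    exact sum_pos (fun x _ => hQd x ▸ prod_pos fun k _ => hq_pos k x) ⟨v, by simp⟩
  have hsum : (∑ y : ∀ j, X j, if ∀ i ∈ M, y i = v i then p y else 0) =
      ∏ i ∈ M, margQ i (v i) := by
    rw [← sum_filter]
    calc ∑ y ∈ agreeOn M v, p y
        = ∑ y ∈ agreeOn Mᶜᶜ v, (∏ i ∈ M, margQ i (v i)) * ∏ i ∈ Mᶜ, q i y := by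
          rw [compl_compl]
          refine sum_congr rfl fun y hy => ?_
          rw [mem_agreeOn] at hy
          rw [hp, prod_congr rfl fun i hi => by rw [hy i hi]]
      _ = ∏ i ∈ M, margQ i (v i) := by
          rw [← mul_sum, sum_agreeOn_compl_prod_eq_one pa ord hord q hq_local hq_norm, mul_one]
  refine ⟨hsum ▸ hmarg_pos, ?_⟩
  rw [hsum, hp v, mul_div_cancel_left₀ _ hmarg_pos.ne']

open Finset in
/-- Conditioning on `M` in the marginal-replacement distribution `p` coincides
with intervening on `M` in `q`: with `p(v) = ∏_{i∈M} q(vᵢ) ∏_{i∉M} qᵢ(vᵢ|v_{pa i})`,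
we have `p(v_{∖M} | v_M) = ∏_{i∉M} qᵢ(vᵢ | v_{pa i})` (positive densities). -/
theorem conditioning_equals_intervening
    {ι : Type*} [Fintype ι] [DecidableEq ι]
    (X : ι → Type*) [∀ i, Fintype (X i)] [∀ i, DecidableEq (X i)]
    (pa : ι → Finset ι) (hpa : ∀ i, i ∉ pa i)
    (ord : ι → ℕ) (hord : ∀ i, ∀ j ∈ pa i, ord j < ord i)  -- acyclicity
    (q : ∀ _ : ι, (∀ j, X j) → ℝ)
    (hq_pos : ∀ i x, 0 < q i x)
    (hq_local : ∀ i, ∀ x y : ∀ j, X j,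
      (∀ j ∈ insert i (pa i), x j = y j) → q i x = q i y)
    (hq_norm : ∀ i, ∀ x : ∀ j, X j, ∑ xi : X i, q i (Function.update x i xi) = 1)
    (Qd : (∀ j, X j) → ℝ) (hQd : ∀ x, Qd x = ∏ i, q i x)
    (margQ : ∀ i : ι, X i → ℝ)
    (hmarg : ∀ i xi, margQ i xi = ∑ x : ∀ j, X j, if x i = xi then Qd x else 0)
    (M : Finset ι)
    (p : (∀ j, X j) → ℝ)
    (hp : ∀ x, p x = (∏ i ∈ M, margQ i (x i)) * ∏ i ∈ Mᶜ, q i x) :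
    ∀ v : ∀ j, X j,
      (0 < ∑ y : ∀ j, X j, if ∀ i ∈ M, y i = v i then p y else 0) ∧
      p v / (∑ y : ∀ j, X j, if ∀ i ∈ M, y i = v i then p y else 0) =
        ∏ i ∈ Mᶜ, q i v :=
  conditioning_equals_intervening_general X pa ord hord q hq_pos hq_local hq_norm Qd hQd margQ hmarg
    M p hp
end
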